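/- arXiv:math/0604593 — 4 statements merged into one kernel-verified Lean document; each statement's English description precedes it below -/
import Mathlib

section
/- Let K'/K be a finite Galois extension of complete discretely valued fields with group Γ, R' the valuation ring of K', and M' a finite free R'-module with a semi-linear Γ-action. Then there exists an integer N ≥ 1 such that the uniformizer π of K raised to the power N kills H^1(Γ, M'); equivalently, H^1(Γ, M') is a torsion R-module. -/
/-!
If some `t ∈ R'` has Galois trace `c = ∑_σ σ(t) ∈ R`, then for a 1-cocycle `f` the average
`m = ∑_h h(t) • f(h)` satisfies `m - g • m = c • f(g)`, so `c` kills `H¹(Γ, M')`. Nonzero such `c`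
exist because the trace of `K'/K` is surjective and every element of `K'` becomes integral
after multiplication by a nonzero element of `R`; in a discrete valuation ring every nonzero
`c` divides a power of `π`.
-/

open groupCohomology

section SemilinearCocycles

universe u

variable {k G M : Type u} {S : Type*} [CommRing k] [Group G] [Fintype G]
  [Semiring S] [Algebra k S]
  [AddCommGroup M] [Module k M] [Module S M] [IsScalarTower k S M]
  {ρ : Representation k G M} {φ : G →* (S ≃ₐ[k] S)}

theorem smul_mem_coboundaries₁_of_sum_eq_algebraMap
    (hsemi : ∀ g (s : S) (m : M), ρ g (s • m) = φ g s • ρ g m)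
    {t : S} {c : k} (ht : ∑ g, φ g t = algebraMap k S c) (f : cocycles₁ (Rep.of ρ)) :
    ⇑(c • f) ∈ coboundaries₁ (Rep.of ρ) := by
  have hf : ∀ g h, f (g * h) = ρ g (f h) + f g := (mem_cocycles₁_iff (A := Rep.of ρ) f).1 f.2
  set m : M := ∑ h, φ h t • f h
  have hshift : ∀ g, ∑ h, φ (g * h) t = algebraMap k S c := fun g => by
    rw [← ht]; exact Fintype.sum_equiv (Equiv.mulLeft g) _ _ fun _ => rfl
  have hm : ∀ g, m = ρ g m + c • f g := fun g => calc
    m = ∑ h, φ (g * h) t • f (g * h) :=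
        (Fintype.sum_equiv (Equiv.mulLeft g) _ _ fun _ => rfl).symm
    _ = ∑ h, φ g (φ h t) • ρ g (f h) + (∑ h, φ (g * h) t) • f g := by
        simp only [hf, smul_add, Finset.sum_add_distrib, Finset.sum_smul, map_mul,
          AlgEquiv.mul_apply]
    _ = ρ g m + c • f g := by
        simp only [m, map_sum, hsemi, hshift, algebraMap_smul]
  refine ⟨-m, funext fun g => ?_⟩
  change ρ g (-m) - -m = c • f g
  rw [map_neg, sub_neg_eq_add, neg_add_eq_sub, sub_eq_iff_eq_add', ← hm g]

theorem smul_H1_eq_zero_of_sum_eq_algebraMap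
    (hsemi : ∀ g (s : S) (m : M), ρ g (s • m) = φ g s • ρ g m)
    {t : S} {c : k} (ht : ∑ g, φ g t = algebraMap k S c) (y : H1 (Rep.of ρ)) : c • y = 0 := by
  induction y using H1_induction_on with
  | h f =>
    rw [← map_smul, H1π_eq_zero_iff]
    exact smul_mem_coboundaries₁_of_sum_eq_algebraMap hsemi ht f

end SemilinearCocycles

section IntegralTrace

variable (A K L B : Type*) [CommRing A] [CommRing B] [Algebra A B] [Field K] [Field L]
  [Algebra A K] [IsFractionRing A K] [Algebra K L] [Algebra A L] [IsScalarTower A K L]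
  [Algebra B L] [IsScalarTower A B L] [IsIntegralClosure B A L]
  [FiniteDimensional K L] [IsGalois K L]

theorem algebraMap_sum_galRestrict (x : B) :
    algebraMap B L (∑ σ : Gal(L/K), galRestrict A K L B σ x) =
      algebraMap K L (Algebra.trace K L (algebraMap B L x)) := by
  simp only [map_sum, algebraMap_galRestrict_apply, trace_eq_sum_automorphisms]

theorem exists_sum_galRestrict_eq_algebraMap [IsDomain A] :
    ∃ t : B, ∃ d : A, d ≠ 0 ∧ ∑ σ : Gal(L/K), galRestrict A K L B σ t = algebraMap A B d := by
  obtain ⟨θ, hθ⟩ := Algebra.trace_surjective K L 1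
  have hθalg : IsAlgebraic A θ :=
    (IsFractionRing.isAlgebraic_iff A K L).2 (Algebra.IsAlgebraic.isAlgebraic θ)
  obtain ⟨d, hd, hdθ⟩ := hθalg.exists_integral_multiple
  refine ⟨IsIntegralClosure.mk' B (d • θ) hdθ, d, hd,
    IsIntegralClosure.algebraMap_injective B A L ?_⟩
  rw [algebraMap_sum_galRestrict, IsIntegralClosure.algebraMap_mk', ← algebraMap_smul K d θ,
    map_smul, hθ, smul_eq_mul, mul_one, ← IsScalarTower.algebraMap_apply,
    ← IsScalarTower.algebraMap_apply]

end IntegralTrace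

theorem IsDiscreteValuationRing.exists_dvd_pow_irreducible {R : Type*} [CommRing R] [IsDomain R]
    [IsDiscreteValuationRing R] {d π : R} (hd : d ≠ 0) (hπ : Irreducible π) :
    ∃ n, d ∣ π ^ n := by
  obtain ⟨n, u, rfl⟩ := eq_unit_mul_pow_irreducible hd hπ
  exact ⟨n, Units.mul_left_dvd.2 dvd_rfl⟩

theorem statement1_general
    (R : Type) [CommRing R] [IsDomain R] [IsDiscreteValuationRing R]
    (K : Type) [Field K] [Algebra R K] [IsFractionRing R K]
    (K' : Type) [Field K'] [Algebra K K'] [FiniteDimensional K K'] [IsGalois K K']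
    [Algebra R K'] [IsScalarTower R K K']
    (R' : Type) [CommRing R']
    [Algebra R R'] [Algebra R' K'] [IsScalarTower R R' K']
    [IsIntegralClosure R' R K']
    (π : R) (hπ : Irreducible π)
    (M' : Type) [AddCommGroup M'] [Module R' M'] [Module R M'] [IsScalarTower R R' M']
    (ρ : Representation R (K' ≃ₐ[K] K') M')
    (hsemi : ∀ (σ : K' ≃ₐ[K] K') (x : R') (m : M'),
      ρ σ (x • m) = (galRestrict R K K' R' σ x) • (ρ σ m)) :
    ∃ N : ℕ, 1 ≤ N ∧ ∀ y : groupCohomology (Rep.of ρ) 1, (π ^ N) • y = 0 := by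
  obtain ⟨t, d, hd, ht⟩ := exists_sum_galRestrict_eq_algebraMap R K K' R'
  obtain ⟨n, hdn⟩ := IsDiscreteValuationRing.exists_dvd_pow_irreducible hd hπ
  obtain ⟨e, he⟩ : d ∣ π ^ (n + 1) := hdn.trans (pow_dvd_pow π n.le_succ)
  have hsum : ∑ σ, galRestrict R K K' R' σ (algebraMap R R' e * t) =
      algebraMap R R' (π ^ (n + 1)) := by
    simp only [map_mul, AlgEquiv.commutes, ← Finset.mul_sum, ht, he, mul_comm]
  exact ⟨n + 1, n.succ_pos,
    smul_H1_eq_zero_of_sum_eq_algebraMap (φ := (galRestrict R K K' R').toMonoidHom) hsemi hsum⟩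

/-- Let `K'/K` be a finite Galois extension of complete discretely valued
fields with group `Γ`, `R'` the valuation ring of `K'`, and `M'` a finite free `R'`-module
with a semilinear `Γ`-action `ρ` (semilinear with respect to the natural Galois action of
`Γ` on `R'`).  Then there exists an integer `N ≥ 1` such that `π^N` kills `H¹(Γ, M')`,
where `π` is a uniformizer of `K`; in particular `H¹(Γ, M')` is a torsion `R`-module. -/
theorem statement1
    (R : Type) [CommRing R] [IsDomain R] [IsDiscreteValuationRing R]
    [IsAdicComplete (IsLocalRing.maximalIdeal R) R]
    (K : Type) [Field K] [Algebra R K] [IsFractionRing R K]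
    (K' : Type) [Field K'] [Algebra K K'] [FiniteDimensional K K'] [IsGalois K K']
    [Algebra R K'] [IsScalarTower R K K']
    (R' : Type) [CommRing R'] [IsDomain R'] [IsDiscreteValuationRing R']
    [Algebra R R'] [Algebra R' K'] [IsScalarTower R R' K']
    [IsIntegralClosure R' R K']
    (π : R) (hπ : Irreducible π)
    (M' : Type) [AddCommGroup M'] [Module R' M'] [Module R M'] [IsScalarTower R R' M']
    [Module.Free R' M'] [Module.Finite R' M']
    (ρ : Representation R (K' ≃ₐ[K] K') M')
    (hsemi : ∀ (σ : K' ≃ₐ[K] K') (x : R') (m : M'),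
      ρ σ (x • m) = (galRestrict R K K' R' σ x) • (ρ σ m)) :
    ∃ N : ℕ, 1 ≤ N ∧ ∀ y : groupCohomology (Rep.of ρ) 1, (π ^ N) • y = 0 :=
  statement1_general R K K' R' π hπ M' ρ hsemi
end

section
/- Let R ⊂ R' be complete discrete valuation rings with R' totally ramified over R, K'/K Galois with group Γ, and suppose π^r kills H^1(Γ, R') for some r ≥ 0. Then for all n ≥ r, the image of the map (R'/π^n R')^Γ → (R'/π^{n} R')^Γ induced by multiplication by π^r equals π^r · (R/π^n R), i.e., is exactly the image of π^r R under the natural map R/π^n → (R'/π^n)^Γ. -/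
/-!
Lift a `Γ`-invariant class of `R'/π^n` to `α ∈ R'`, so that `σ α - α = π^n u(σ)`. Cancelling `π^n`
in the domain `R'` shows that `u` is a 1-cocycle, hence `π^r u(σ) = σ b - b` for some `b ∈ R'`.
Then `w = α - π^(n-r) b` is `Γ`-invariant, so it lies in `R`, and `π^r α = π^r w + π^n b`.
-/

universe u

namespace groupCohomology

variable {k G : Type u} [CommRing k] [Group G] {A : Rep.{u} k G}

theorem mem_cocycles₁_of_sub_eq_smul {c : k} (hc : IsSMulRegular A c) {m : A} {u : G → A}
    (hu : ∀ g, A.ρ g m - m = c • u g) : u ∈ cocycles₁ A := by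
  rw [mem_cocycles₁_iff]
  intro g h
  apply hc
  calc c • u (g * h) = A.ρ g (A.ρ h m - m) + (A.ρ g m - m) := by
        rw [← hu, map_mul, Module.End.mul_apply, map_sub]; abel
    _ = c • (A.ρ g (u h) + u g) := by rw [hu, hu, map_smul, smul_add]

theorem exists_invariant_smul_eq_add_smul {a c : k} (hA : ∀ y : H1 A, a • y = 0)
    (hac : IsSMulRegular A (a * c)) {m : A} (hm : ∀ g, ∃ v, A.ρ g m - m = (a * c) • v) :
    ∃ w b : A, (∀ g, A.ρ g w = w) ∧ a • m = a • w + (a * c) • b := by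
  choose u hu using hm
  let z : cocycles₁ A := ⟨u, mem_cocycles₁_of_sub_eq_smul hac hu⟩
  obtain ⟨b, hb⟩ : ⇑(a • z) ∈ coboundaries₁ A := by
    rw [← H1π_eq_zero_iff, map_smul, hA]
  have hb' (g : G) : A.ρ g b - b = a • u g := by
    rw [← d₀₁_hom_apply]
    exact congrFun hb g
  refine ⟨m - c • b, b, fun g => ?_, ?_⟩
  · rw [map_sub, map_smul, ← sub_eq_zero, sub_sub_sub_comm, ← smul_sub, hu, hb', smul_smul,
      mul_comm c a, sub_self]
  · rw [smul_sub, smul_smul, sub_add_cancel]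

end groupCohomology

theorem exists_algebraMap_eq_of_forall_galRestrict_apply_eq (A K L B : Type*)
    [CommRing A] [IsDomain A] [IsIntegrallyClosed A] [Field K] [Algebra A K] [IsFractionRing A K]
    [Field L] [Algebra K L] [FiniteDimensional K L] [IsGalois K L] [Algebra A L]
    [IsScalarTower A K L] [CommRing B] [IsDomain B] [Algebra A B] [Algebra B L]
    [IsScalarTower A B L] [IsIntegralClosure B A L] {x : B}
    (hx : ∀ σ : Gal(L/K), galRestrict A K L B σ x = x) :
    ∃ a : A, algebraMap A B a = x :=
  have := IsIntegralClosure.isFractionRing_of_finite_extension A K L B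
  (Algebra.isInvariant_of_isGalois A K L B).isInvariant x hx

theorem statement4_general
    (R : Type) [CommRing R] [IsDomain R] [IsDiscreteValuationRing R]
    (K : Type) [Field K] [Algebra R K] [IsFractionRing R K]
    (K' : Type) [Field K'] [Algebra K K'] [FiniteDimensional K K'] [IsGalois K K']
    [Algebra R K'] [IsScalarTower R K K']
    (R' : Type) [CommRing R'] [IsDomain R']
    [Algebra R R'] [Algebra R' K'] [IsScalarTower R R' K']
    [IsIntegralClosure R' R K']
    (π : R) (hπ : Irreducible π)
    -- the natural semilinear action of `Γ` on `R'` and the assumption that `π^r`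
    -- kills `H¹(Γ, R')`:
    (ρ : Representation R (K' ≃ₐ[K] K') R')
    (hρ : ∀ (σ : K' ≃ₐ[K] K') (x : R'), ρ σ x = galRestrict R K K' R' σ x)
    (r : ℕ) (hr : ∀ y : groupCohomology (Rep.of ρ) 1, (π ^ r) • y = 0)
    (n : ℕ) (hn : r ≤ n)
    -- the induced action of `Γ` on `R'/π^n R'`:
    (act : (K' ≃ₐ[K] K') →*
      ((R' ⧸ Ideal.span {algebraMap R R' π ^ n}) ≃+* (R' ⧸ Ideal.span {algebraMap R R' π ^ n})))
    (hact : ∀ (σ : K' ≃ₐ[K] K') (x : R'),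
      act σ (Ideal.Quotient.mk _ x) = Ideal.Quotient.mk _ (galRestrict R K K' R' σ x)) :
    {y : R' ⧸ Ideal.span {algebraMap R R' π ^ n} |
        ∃ a, (∀ σ, act σ a = a) ∧
          y = (Ideal.Quotient.mk _ (algebraMap R R' π)) ^ r * a} =
      {y : R' ⧸ Ideal.span {algebraMap R R' π ^ n} |
        ∃ x : R, y = Ideal.Quotient.mk _ (algebraMap R R' (π ^ r * x))} := by
  have hπn : algebraMap R R' (π ^ r * π ^ (n - r)) = algebraMap R R' π ^ n := by
    rw [← pow_add, Nat.add_sub_cancel' hn, map_pow]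
  have : FaithfulSMul R R' := .of_field_isFractionRing R R' K K'
  have hreg : IsSMulRegular R' (π ^ r * π ^ (n - r)) :=
    .of_ne_zero (mul_ne_zero (pow_ne_zero _ hπ.ne_zero) (pow_ne_zero _ hπ.ne_zero))
  ext y
  constructor
  · rintro ⟨a, ha, rfl⟩
    obtain ⟨α, rfl⟩ := Ideal.Quotient.mk_surjective a
    have hα (σ : K' ≃ₐ[K] K') : ∃ v, (Rep.of ρ).ρ σ α - α = (π ^ r * π ^ (n - r)) • v := by
      have := ha σ
      rw [hact, Ideal.Quotient.eq, Ideal.mem_span_singleton'] at this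
      obtain ⟨v, hv⟩ := this
      exact ⟨v, by rw [Rep.of_ρ, hρ, ← hv, Algebra.smul_def, hπn, mul_comm]⟩
    obtain ⟨w, b, hw, hαw⟩ := groupCohomology.exists_invariant_smul_eq_add_smul hr hreg hα
    obtain ⟨x, rfl⟩ := exists_algebraMap_eq_of_forall_galRestrict_apply_eq R K K' R'
      (fun σ => by rw [← hρ]; exact hw σ)
    refine ⟨x, ?_⟩
    rw [← map_pow (Ideal.Quotient.mk _), ← map_mul, Ideal.Quotient.eq, Ideal.mem_span_singleton']
    refine ⟨b, ?_⟩
    simp only [Algebra.smul_def, map_mul, map_pow] at hαw hπn ⊢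
    linear_combination -hαw - b * hπn
  · rintro ⟨x, rfl⟩
    refine ⟨Ideal.Quotient.mk _ (algebraMap R R' x), fun σ => ?_, ?_⟩
    · rw [hact, AlgEquiv.commutes]
    · rw [map_mul, map_pow, map_mul, map_pow]

/-- Let `R ⊆ R'` be complete discrete valuation rings with `R'` totally
ramified over `R` (the induced map of residue fields is an isomorphism), `K'/K` Galois with
group `Γ` (acting on `R'` via `galRestrict`, and hence on `R'/π^n R'` via the given action
`act`), and suppose `π^r` kills `H¹(Γ, R')` for some `r ≥ 0`.  Then for all `n ≥ r`, the
image of the endomorphism of `(R'/π^n R')^Γ` induced by multiplication by `π^r` is exactly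
`π^r · (R/π^n R)`, i.e. the image of `π^r R` under the natural map `R/π^n → (R'/π^n)^Γ`. -/
theorem statement4
    (R : Type) [CommRing R] [IsDomain R] [IsDiscreteValuationRing R]
    [IsAdicComplete (IsLocalRing.maximalIdeal R) R]
    (K : Type) [Field K] [Algebra R K] [IsFractionRing R K]
    (K' : Type) [Field K'] [Algebra K K'] [FiniteDimensional K K'] [IsGalois K K']
    [Algebra R K'] [IsScalarTower R K K']
    (R' : Type) [CommRing R'] [IsDomain R'] [IsDiscreteValuationRing R']
    [IsAdicComplete (IsLocalRing.maximalIdeal R') R']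
    [Algebra R R'] [Algebra R' K'] [IsScalarTower R R' K']
    [IsIntegralClosure R' R K']
    [IsLocalHom (algebraMap R R')]
    -- totally ramified:
    (htot : Function.Bijective (IsLocalRing.ResidueField.map (algebraMap R R')))
    (π : R) (hπ : Irreducible π)
    -- the natural semilinear action of `Γ` on `R'` and the assumption that `π^r`
    -- kills `H¹(Γ, R')`:
    (ρ : Representation R (K' ≃ₐ[K] K') R')
    (hρ : ∀ (σ : K' ≃ₐ[K] K') (x : R'), ρ σ x = galRestrict R K K' R' σ x)
    (r : ℕ) (hr : ∀ y : groupCohomology (Rep.of ρ) 1, (π ^ r) • y = 0)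
    (n : ℕ) (hn : r ≤ n)
    -- the induced action of `Γ` on `R'/π^n R'`:
    (act : (K' ≃ₐ[K] K') →*
      ((R' ⧸ Ideal.span {algebraMap R R' π ^ n}) ≃+* (R' ⧸ Ideal.span {algebraMap R R' π ^ n})))
    (hact : ∀ (σ : K' ≃ₐ[K] K') (x : R'),
      act σ (Ideal.Quotient.mk _ x) = Ideal.Quotient.mk _ (galRestrict R K K' R' σ x)) :
    {y : R' ⧸ Ideal.span {algebraMap R R' π ^ n} |
        ∃ a, (∀ σ, act σ a = a) ∧
          y = (Ideal.Quotient.mk _ (algebraMap R R' π)) ^ r * a} =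
      {y : R' ⧸ Ideal.span {algebraMap R R' π ^ n} |
        ∃ x : R, y = Ideal.Quotient.mk _ (algebraMap R R' (π ^ r * x))} :=
  statement4_general R K K' R' π hπ ρ hρ r hr n hn act hact
end

section
/- Let K'/K be a finite Galois extension with group Γ and valuation rings R ⊂ R', and let (M', φ_σ) be a Γ-descent module with M' finite free over R'. If M' is an effective descent module at π^d-torsion level for a suitable constant d depending only on R'/R (specifically: M'/π^d M' admits an effective descent to a finite free R/π^d-module), and if π^{d/2} kills H^1(Γ, M'), then M' itself admits an effective descent, namely M = (M')^Γ, and the natural map (M')^Γ ⊗_R R' → M' is an isomorphism. -/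
/-!
Lift the `Γ`-invariant basis of `M'/π^(2s) M'` to elements `m j` of `M'`. For each `j` the
defects `(σ (m j) - m j) / π^(2s)` form a `1`-cocycle; since `π^s` kills `H¹(Γ, M')`,
`π^s` times it is a coboundary `σ (x j) - x j`, and then `m j - π^s • x j` is `Γ`-invariant.
These invariant vectors agree with the `m j` modulo `π^s`, so by Nakayama they span `M'`, and
as there are `rank M'` of them they form an `R'`-basis. The coordinates of an invariant vector
in an invariant basis are Galois-fixed elements of `R'`, hence lie in `R`; so `(M')^Γ` is the
free `R`-module on this basis, and `(M')^Γ ⊗_R R' → M'` is an isomorphism.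
-/

universe u

open Module Submodule

section LinearAlgebra

variable {A M : Type*} [CommRing A] [AddCommGroup M] [Module A M]

theorem finrank_quotient_smul_top [Module.Free A M] [Module.Finite A M] (I : Ideal A)
    [Nontrivial (A ⧸ I)] :
    finrank (A ⧸ I) (M ⧸ I • (⊤ : Submodule A M)) = finrank A M :=
  have : Nontrivial A := (Ideal.Quotient.mk I).domain_nontrivial
  ((TensorProduct.quotTensorEquivQuotSMul M I).extendScalarsOfSurjective
    Ideal.Quotient.mk_surjective).symm.finrank_eq.trans Module.finrank_baseChange

theorem top_le_smul_top_sup_span_of_mk_eq_basis {I : Ideal A} {ι : Type*}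
    (b : Basis ι (A ⧸ I) (M ⧸ I • (⊤ : Submodule A M))) {v : ι → M}
    (hv : ∀ i, Submodule.Quotient.mk (v i) = b i) :
    ⊤ ≤ I • (⊤ : Submodule A M) ⊔ span A (Set.range v) := by
  set P : Submodule A M := I • ⊤
  rw [top_le_iff, ← map_mkQ_eq_top, map_span, ← Set.range_comp]
  have : span (A ⧸ I) (Set.range (P.mkQ ∘ v)) = ⊤ := by
    rw [← b.span_eq]; congr 1; ext; simp [hv]
  rw [← restrictScalars_span A (A ⧸ I) Ideal.Quotient.mk_surjective, this, restrictScalars_top]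

theorem exists_basis_eq_of_sub_mem_smul_top [Module.Free A M] [Module.Finite A M]
    {I J : Ideal A} [Nontrivial (A ⧸ I)] (hIJ : I ≤ J) (hJ : J ≤ Ideal.jacobson ⊥)
    {ι : Type*} [Fintype ι] (b : Basis ι (A ⧸ I) (M ⧸ I • (⊤ : Submodule A M)))
    {v w : ι → M} (hv : ∀ i, Submodule.Quotient.mk (v i) = b i)
    (hvw : ∀ i, v i - w i ∈ J • (⊤ : Submodule A M)) :
    ∃ B : Basis ι A M, ⇑B = w := by
  have hspan : ⊤ ≤ span A (Set.range w) := by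
    refine le_of_le_smul_of_le_jacobson_bot Module.Finite.fg_top hJ ?_
    refine (top_le_smul_top_sup_span_of_mk_eq_basis b hv).trans (sup_le ?_ ?_)
    · exact (smul_mono_left hIJ).trans le_sup_right
    · rw [span_le]
      rintro _ ⟨i, rfl⟩
      rw [← sub_add_cancel (v i) (w i), add_comm]
      exact add_mem_sup (subset_span ⟨i, rfl⟩) (hvw i)
  have hcard : Fintype.card ι = finrank A M := by
    rw [← finrank_eq_card_basis b, finrank_quotient_smul_top]
  exact ⟨basisOfTopLeSpanOfCardEqFinrank w hspan hcard, coe_basisOfTopLeSpanOfCardEqFinrank ..⟩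

end LinearAlgebra

theorem isBaseChange_subtype_of_basis {R R' M : Type*} [CommRing R] [CommRing R'] [Algebra R R']
    [AddCommGroup M] [Module R' M] [Module R M] [IsScalarTower R R' M]
    (hinj : Function.Injective (algebraMap R R'))
    {N : Submodule R M} {ι : Type*} [Fintype ι] (B : Basis ι R' M) (hBN : ∀ i, B i ∈ N)
    (hN : ∀ z ∈ N, ∀ i, B.repr z i ∈ (algebraMap R R').range) :
    IsBaseChange R' N.subtype := by
  let f : (ι → R) →ₗ[R] M := Fintype.linearCombination R B
  have hfN : ∀ a, f a ∈ N := fun a =>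
    sum_mem fun i _ => N.smul_mem (a i) (hBN i)
  have hf : ∀ a i, B.repr (f a) i = algebraMap R R' (a i) := by
    intro a i
    have : f a = ∑ j, algebraMap R R' (a j) • B j := by
      simp [f, Fintype.linearCombination_apply, algebraMap_smul]
    rw [this, B.repr_sum_self]
  have hf_inj : Function.Injective (f.codRestrict N hfN) := fun a a' h =>
    funext fun i => hinj <| by
      rw [← hf, ← hf]
      exact congrArg (fun z : N => B.repr z i) h
  have hf_surj : Function.Surjective (f.codRestrict N hfN) := fun z => by
    choose a ha using hN z z.2
    exact ⟨a, Subtype.ext (B.repr.injective (Finsupp.ext fun i => by simp [hf, ha]))⟩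
  let e : (ι → R) ≃ₗ[R] N := LinearEquiv.ofBijective _ ⟨hf_inj, hf_surj⟩
  convert (IsBaseChange.of_fintype_basis R B).comp_equiv e.symm using 1
  ext z
  exact congrArg Subtype.val (e.apply_symm_apply z).symm

theorem Module.Basis.repr_fixed_of_fixed {R M G ι F : Type*} [CommRing R] [AddCommGroup M]
    [Module R M] [Fintype ι] [FunLike F M M] [AddMonoidHomClass F M M] (τ : G → R → R)
    (ρ : G → F) (hsemi : ∀ g x m, ρ g (x • m) = τ g x • ρ g m) (B : Basis ι R M)
    (hB : ∀ g i, ρ g (B i) = B i) {z : M} (hz : ∀ g, ρ g z = z) (g : G) (i : ι) :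
    τ g (B.repr z i) = B.repr z i := by
  have h : ∑ j, τ g (B.repr z j) • B j = z :=
    calc ∑ j, τ g (B.repr z j) • B j = ρ g (∑ j, B.repr z j • B j) := by
          simp only [map_sum, hsemi, hB]
      _ = z := by rw [B.sum_repr, hz]
  have := congrArg (fun y => B.repr y i) h
  simpa only [B.repr_sum_self] using this

section Cohomology

variable {k G V : Type u} [CommRing k] [Group G] [AddCommGroup V] [Module k V]
  (ρ : Representation k G V)

theorem exists_smul_eq_coboundary_of_smul_H1_eq_zero {r : k}
    (hr : ∀ y : groupCohomology (Rep.of ρ) 1, r • y = 0) {c : G → V}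
    (hc : ∀ g h, c (g * h) = ρ g (c h) + c g) :
    ∃ x, ∀ g, r • c g = ρ g x - x := by
  have hcoc : c ∈ groupCohomology.cocycles₁ (Rep.of ρ) :=
    (groupCohomology.mem_cocycles₁_iff (A := Rep.of ρ) c).2 hc
  have hcob : ⇑(r • (⟨c, hcoc⟩ : groupCohomology.cocycles₁ (Rep.of ρ)))
      ∈ groupCohomology.coboundaries₁ (Rep.of ρ) := by
    rw [← groupCohomology.H1π_eq_zero_iff, map_smul]
    exact hr _
  obtain ⟨x, hx⟩ := hcob
  exact ⟨x, fun g => (congrFun hx g).symm⟩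

theorem exists_fixed_sub_smul_of_sub_eq_mul_smul {r : k}
    (hr : ∀ y : groupCohomology (Rep.of ρ) 1, r • y = 0) (hreg : IsSMulRegular V (r * r))
    {m : V} (hm : ∀ g, ∃ y, ρ g m - m = (r * r) • y) :
    ∃ x, ∀ g, ρ g (m - r • x) = m - r • x := by
  choose c hc using hm
  have hcoc : ∀ g h, c (g * h) = ρ g (c h) + c g := by
    intro g h
    apply hreg
    simp only [smul_add, ← map_smul, ← hc, map_sub, map_mul, Module.End.mul_apply]
    abel
  obtain ⟨x, hx⟩ := exists_smul_eq_coboundary_of_smul_H1_eq_zero ρ hr hcoc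
  refine ⟨x, fun g => ?_⟩
  rw [← sub_eq_zero]
  calc ρ g (m - r • x) - (m - r • x) = (ρ g m - m) - r • (ρ g x - x) := by
        rw [map_sub, map_smul, smul_sub]; abel
    _ = 0 := by rw [hc, ← hx, smul_smul, sub_self]

end Cohomology

theorem exists_fixed_basis_of_fixed_basis_quotient {k M' G : Type u} {R' ι : Type*}
    [CommRing k] [CommRing R'] [IsLocalRing R'] [Algebra k R'] [AddCommGroup M'] [Module R' M']
    [Module k M'] [IsScalarTower k R' M'] [Module.Free R' M'] [Module.Finite R' M'] [Group G]
    [Fintype ι]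
    (ρ : Representation k G M') {r : k} (hr : ∀ y : groupCohomology (Rep.of ρ) 1, r • y = 0)
    (hunit : ¬IsUnit (algebraMap k R' r)) {q : R'} (hq : algebraMap k R' r ^ 2 = q)
    (hreg : IsSMulRegular M' q)
    (b : Basis ι (R' ⧸ Ideal.span {q}) (M' ⧸ Ideal.span {q} • (⊤ : Submodule R' M')))
    {v : ι → M'} (hv : ∀ i, Submodule.Quotient.mk (v i) = b i)
    (hfix : ∀ g i, ρ g (v i) - v i ∈ Ideal.span {q} • (⊤ : Submodule R' M')) :
    ∃ B : Basis ι R' M', ∀ g i, ρ g (B i) = B i := by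
  have hq' : q = algebraMap k R' (r * r) := by rw [← hq, map_mul, sq]
  have hfix' : ∀ i g, ∃ y, ρ g (v i) - v i = (r * r) • y := fun i g => by
    obtain ⟨y, -, hy⟩ := (mem_smul_pointwise_iff_exists _ _ _).1
      ((ideal_span_singleton_smul q ⊤).le (hfix g i))
    exact ⟨y, by rw [← hy, hq', algebraMap_smul]⟩
  have hreg' : IsSMulRegular M' (r * r) :=
    isSMulRegular_algebraMap_iff (A := R').1 (hq' ▸ hreg)
  choose x hx using fun i => exists_fixed_sub_smul_of_sub_eq_mul_smul ρ hr hreg' (hfix' i)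
  have hJ : Ideal.span {algebraMap k R' r} ≤ IsLocalRing.maximalIdeal R' :=
    (Ideal.span_singleton_le_iff_mem _).2 hunit
  have hIJ : Ideal.span {q} ≤ Ideal.span {algebraMap k R' r} :=
    Ideal.span_singleton_le_span_singleton.2 (hq ▸ dvd_pow_self _ two_ne_zero)
  have : Nontrivial (R' ⧸ Ideal.span {q}) :=
    Ideal.Quotient.nontrivial_iff.2 (ne_top_of_le_ne_top
      (IsLocalRing.maximalIdeal.isMaximal R').ne_top (hIJ.trans hJ))
  obtain ⟨B, hB⟩ := exists_basis_eq_of_sub_mem_smul_top hIJ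
    (hJ.trans (IsLocalRing.maximalIdeal_le_jacobson ⊥)) b hv
    (w := fun i => v i - r • x i) fun i => by
      rw [sub_sub_cancel, ← algebraMap_smul R' r (x i)]
      exact smul_mem_smul (Ideal.mem_span_singleton_self _) mem_top
  exact ⟨B, fun g i => by simp only [hB, hx]⟩

theorem injective_algebraMap_of_isFractionRing (R K K' R' : Type*) [CommRing R] [Field K]
    [Algebra R K] [IsFractionRing R K] [Field K'] [Algebra K K'] [Algebra R K']
    [IsScalarTower R K K'] [CommRing R'] [Algebra R R'] [Algebra R' K'] [IsScalarTower R R' K'] :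
    Function.Injective (algebraMap R R') := by
  refine Function.Injective.of_comp (f := algebraMap R' K') ?_
  rw [← RingHom.coe_comp, ← IsScalarTower.algebraMap_eq, IsScalarTower.algebraMap_eq R K K']
  exact (algebraMap K K').injective.comp (IsFractionRing.injective R K)

theorem not_isUnit_algebraMap_of_isFractionRing (K K' : Type*) {R R' : Type*} [CommRing R]
    [Field K] [Algebra R K] [IsFractionRing R K] [Field K'] [Algebra K K'] [Algebra R K']
    [IsScalarTower R K K'] [CommRing R'] [Algebra R R'] [Algebra R' K'] [IsScalarTower R R' K']
    [IsIntegralClosure R' R K'] {r : R} (hr : ¬IsUnit r) :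
    ¬IsUnit (algebraMap R R' r) := by
  have := IsIntegralClosure.isIntegral_algebra R (A := R') K'
  have := (faithfulSMul_iff_algebraMap_injective R R').2
    (injective_algebraMap_of_isFractionRing R K K' R')
  rwa [isUnit_map_iff]

theorem mem_range_algebraMap_of_forall_galRestrict_eq {R K K' R' : Type*} [CommRing R]
    [IsIntegrallyClosed R] [Field K] [Algebra R K] [IsFractionRing R K] [Field K'] [Algebra K K']
    [FiniteDimensional K K'] [IsGalois K K'] [Algebra R K'] [IsScalarTower R K K'] [CommRing R']
    [Algebra R R'] [Algebra R' K'] [IsScalarTower R R' K'] [IsIntegralClosure R' R K'] {a : R'}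
    (ha : ∀ σ, galRestrict R K K' R' σ a = a) : a ∈ (algebraMap R R').range := by
  obtain ⟨c, hc⟩ := (IsGalois.mem_range_algebraMap_iff_fixed (F := K) (algebraMap R' K' a)).2
    fun σ => by rw [← algebraMap_galRestrict_apply R, ha σ]
  have hci : IsIntegral R c := by
    rw [← isIntegral_algebraMap_iff (algebraMap K K').injective, hc]
    exact IsIntegralClosure.isIntegral_iff.2 ⟨a, rfl⟩
  obtain ⟨r, hr⟩ := IsIntegrallyClosed.isIntegral_iff.1 hci
  refine ⟨r, IsIntegralClosure.algebraMap_injective R' R K' ?_⟩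
  rw [← IsScalarTower.algebraMap_apply, IsScalarTower.algebraMap_apply R K K', hr, hc]

/-- Let `K'/K` be a finite Galois extension with group `Γ`, valuation
rings `R ⊆ R'`, and let `(M', ρ)` be a `Γ`-descent module with `M'` finite free over `R'`
(`ρ` semilinear over the Galois action on `R'`).  Suppose that, for `d = 2s`,
`M'/π^d M'` admits an effective descent to a finite free `R/π^d`-module (equivalently, it
has a basis over `R'/π^d` consisting of `Γ`-invariant elements), and that `π^(d/2) = π^s`
kills `H¹(Γ, M')`.  Then `M'` itself admits an effective descent, namely `M = (M')^Γ`: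
the natural map `(M')^Γ ⊗_R R' → M'` is an isomorphism (i.e. the inclusion of the
invariants realizes `M'` as a base change). -/
theorem statement6
    (R : Type) [CommRing R] [IsDomain R] [IsDiscreteValuationRing R]
    (K : Type) [Field K] [Algebra R K] [IsFractionRing R K]
    (K' : Type) [Field K'] [Algebra K K'] [FiniteDimensional K K'] [IsGalois K K']
    [Algebra R K'] [IsScalarTower R K K']
    (R' : Type) [CommRing R'] [IsDomain R'] [IsDiscreteValuationRing R']
    [Algebra R R'] [Algebra R' K'] [IsScalarTower R R' K']
    [IsIntegralClosure R' R K']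
    (π : R) (hπ : Irreducible π)
    (M' : Type) [AddCommGroup M'] [Module R' M'] [Module R M'] [IsScalarTower R R' M']
    [Module.Free R' M'] [Module.Finite R' M']
    (ρ : Representation R (K' ≃ₐ[K] K') M')
    (hsemi : ∀ (σ : K' ≃ₐ[K] K') (x : R') (m : M'),
      ρ σ (x • m) = (galRestrict R K K' R' σ x) • (ρ σ m))
    (s : ℕ) (hs : 1 ≤ s)
    -- `π^(d/2) = π^s` kills `H¹(Γ, M')`:
    (hH1 : ∀ y : groupCohomology (Rep.of ρ) 1, (π ^ s) • y = 0)
    -- the induced `Γ`-action on `M'/π^(2s) M'`: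
    (ρQ : Representation R (K' ≃ₐ[K] K')
      (M' ⧸ (Ideal.span {algebraMap R R' π ^ (2 * s)} • (⊤ : Submodule R' M'))))
    (hρQ : ∀ (σ : K' ≃ₐ[K] K') (m : M'),
      ρQ σ (Submodule.Quotient.mk m) = Submodule.Quotient.mk (ρ σ m))
    -- effective descent of `M'/π^(2s) M'` to a finite free `R/π^(2s)`-module: it has a
    -- basis over `R'/π^(2s)` consisting of `Γ`-invariant elements
    (hdesc : ∃ (k : ℕ) (b : Module.Basis (Fin k) (R' ⧸ Ideal.span {algebraMap R R' π ^ (2 * s)})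
        (M' ⧸ (Ideal.span {algebraMap R R' π ^ (2 * s)} • (⊤ : Submodule R' M')))),
      ∀ (j : Fin k) (σ : K' ≃ₐ[K] K'), ρQ σ (b j) = b j) :
    IsBaseChange R'
      (Submodule.subtype (⨅ σ : K' ≃ₐ[K] K', LinearMap.eqLocus (ρ σ) LinearMap.id)) := by
  obtain ⟨k, b, hb⟩ := hdesc
  choose v hv using fun j => Submodule.Quotient.mk_surjective _ (b j)
  have hπs : ¬IsUnit (algebraMap R R' (π ^ s)) :=
    not_isUnit_algebraMap_of_isFractionRing K K' fun h =>
      hπ.not_isUnit ((isUnit_pow_iff (by omega)).1 h)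
  have hq : algebraMap R R' (π ^ s) ^ 2 = algebraMap R R' π ^ (2 * s) := by
    rw [map_pow, ← pow_mul, mul_comm]
  have hinj := injective_algebraMap_of_isFractionRing R K K' R'
  have hreg : IsSMulRegular M' (algebraMap R R' π ^ (2 * s)) :=
    .of_ne_zero (pow_ne_zero _ ((map_ne_zero_iff _ hinj).2 hπ.ne_zero))
  obtain ⟨B, hB⟩ := exists_fixed_basis_of_fixed_basis_quotient ρ hH1 hπs hq hreg b hv
    fun σ j => (Submodule.Quotient.mk_eq_zero _).1 <| by
      rw [Submodule.Quotient.mk_sub, ← hρQ, hv, hb, sub_self]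
  refine isBaseChange_subtype_of_basis hinj B
    (fun i => mem_iInf _ |>.2 fun σ => hB σ i) fun z hz i => ?_
  have hzfix : ∀ σ, ρ σ z = z := fun σ => mem_iInf _ |>.1 hz σ
  exact mem_range_algebraMap_of_forall_galRestrict_eq (K := K) (K' := K') fun σ =>
    B.repr_fixed_of_fixed (fun σ => galRestrict R K K' R' σ) ρ hsemi hB hzfix σ i
end

section
/- A short exact sequence 0 → M'_1 → M'_2 → M'_3 → 0 of Γ-descent modules over R', with each M'_i finite free over R', admits an effective descent to a short exact sequence of R-modules if and only if each (M'_i, φ_i) individually admits an effective descent. -/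
/-- A `Γ`-descent module `(M', ρ)` over `R'` admits an *effective descent* to `R`:
there is an `R`-submodule `N` of `M'` consisting of `Γ`-invariant elements such that
the natural map `N ⊗_R R' → M'` is an isomorphism (i.e. the inclusion of `N` realizes
`M'` as the base change of `N` along `R → R'`). -/
def HasEffectiveDescent (R : Type) [CommRing R] (R' : Type) [CommRing R'] [Algebra R R']
    (Γ : Type) [Monoid Γ]
    (M' : Type) [AddCommGroup M'] [Module R' M'] [Module R M'] [IsScalarTower R R' M']
    (ρ : Representation R Γ M') : Prop :=
  ∃ N : Submodule R M', (∀ σ : Γ, ∀ n ∈ N, ρ σ n = n) ∧ IsBaseChange R' N.subtype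

/-! An effective descent `N` of `(M', ρ)` is forced to be the module of `ρ`-invariants: in an
`R`-basis of `N`, which is also an `R'`-basis of `M'`, an invariant vector has Galois-fixed
coefficients, and these lie in `R` because `R'` is the integral closure of `R` in the Galois
extension `K'/K`. Hence `g₁` and `g₂` carry the descents into each other, left exactness of
invariants gives `g₁(N₁) = N₂ ∩ ker g₂`, and `N₂ → N₃` is onto because its base change along
the faithfully flat (indeed free) extension `R → R'` is the surjection `g₂`. -/

section Descent

variable {R R' : Type*} [CommRing R] [CommRing R'] [Algebra R R']

theorem Representation.invariants_eq_of_isBaseChange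
    {M : Type*} [AddCommGroup M] [Module R' M] [Module R M] [IsScalarTower R R' M]
    {Γ : Type*} [Group Γ] (τ : Γ → R' ≃ₐ[R] R')
    (hτ : ∀ a : R', (∀ σ, τ σ a = a) → a ∈ Set.range (algebraMap R R'))
    (ρ : Representation R Γ M) (hρ : ∀ σ (x : R') (m : M), ρ σ (x • m) = τ σ x • ρ σ m)
    (N : Submodule R M) [Module.Free R N] [Module.Finite R N]
    (hN : ∀ σ, ∀ n ∈ N, ρ σ n = n) (hbc : IsBaseChange R' N.subtype) :
    ρ.invariants = N := by
  refine le_antisymm (fun m hm => ?_) (fun n hn σ => hN σ n hn)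
  let b := Module.Free.chooseBasis R N
  let B := hbc.basis b
  have hB : ∀ i, B i = b i := hbc.basis_apply b
  let c := B.repr m
  have hm_eq : m = ∑ i, c i • B i := (B.sum_repr m).symm
  have hc_fixed : ∀ i σ, τ σ (c i) = c i := by
    intro i σ
    have hm_σ : m = ∑ i, τ σ (c i) • B i := by
      conv_lhs => rw [← hm σ, hm_eq]
      simp only [map_sum, hρ, hB, hN σ _ (b _).2]
    calc τ σ (c i) = B.repr (∑ i, τ σ (c i) • B i) i := by rw [B.repr_sum_self]
      _ = c i := by rw [← hm_σ]
  choose r hr using fun i => hτ (c i) (hc_fixed i)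
  rw [hm_eq]
  refine N.sum_mem fun i _ => ?_
  rw [← hr i, hB, algebraMap_smul]
  exact N.smul_mem _ (b i).2

theorem IsBaseChange.surjective_of_surjective [Module.FaithfullyFlat R R']
    {N₂ N₃ M₂ M₃ : Type*} [AddCommGroup N₂] [Module R N₂] [AddCommGroup N₃] [Module R N₃]
    [AddCommGroup M₂] [Module R' M₂] [Module R M₂] [IsScalarTower R R' M₂]
    [AddCommGroup M₃] [Module R' M₃] [Module R M₃] [IsScalarTower R R' M₃]
    {f₂ : N₂ →ₗ[R] M₂} {f₃ : N₃ →ₗ[R] M₃} (h₂ : IsBaseChange R' f₂) (h₃ : IsBaseChange R' f₃)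
    {φ : N₂ →ₗ[R] N₃} {g : M₂ →ₗ[R'] M₃} (hcomm : ∀ n, g (f₂ n) = f₃ (φ n))
    (hg : Function.Surjective g) : Function.Surjective φ := by
  have hsquare : (h₃.equiv.toLinearMap.restrictScalars R) ∘ₗ φ.lTensor R'
      = g.restrictScalars R ∘ₗ h₂.equiv.toLinearMap.restrictScalars R :=
    TensorProduct.ext' fun s n => by simp [IsBaseChange.equiv_tmul, hcomm]
  rw [← Module.FaithfullyFlat.lTensor_surjective_iff_surjective R R',
    ← Function.Surjective.of_comp_iff' h₃.equiv.bijective]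
  have := congrArg DFunLike.coe hsquare
  simp only [LinearMap.coe_comp, LinearMap.coe_restrictScalars, LinearEquiv.coe_coe] at this
  rw [this]
  exact hg.comp h₂.equiv.surjective

theorem Representation.map_invariants_eq_inf_ker
    {M₁ M₂ M₃ : Type*} [AddCommGroup M₁] [Module R M₁] [AddCommGroup M₂] [Module R M₂]
    [AddCommGroup M₃] [Module R M₃] {Γ : Type*} [Group Γ]
    {ρ₁ : Representation R Γ M₁} {ρ₂ : Representation R Γ M₂}
    {f₁ : M₁ →ₗ[R] M₂} {f₂ : M₂ →ₗ[R] M₃} (hf₁ : Function.Injective f₁)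
    (hexact : Function.Exact f₁ f₂) (hequiv : ∀ σ m, f₁ (ρ₁ σ m) = ρ₂ σ (f₁ m)) :
    ρ₁.invariants.map f₁ = ρ₂.invariants ⊓ LinearMap.ker f₂ := by
  apply le_antisymm
  · rintro _ ⟨m, hm, rfl⟩
    exact ⟨fun σ => by rw [← hequiv, hm σ], (hexact _).mpr ⟨m, rfl⟩⟩
  · rintro _ ⟨hm, hker⟩
    obtain ⟨m, rfl⟩ := (hexact _).mp hker
    exact ⟨m, fun σ => hf₁ (by rw [hequiv, hm σ]), rfl⟩

theorem Representation.map_invariants_le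
    {M₂ M₃ : Type*} [AddCommGroup M₂] [Module R M₂] [AddCommGroup M₃] [Module R M₃]
    {Γ : Type*} [Group Γ] {ρ₂ : Representation R Γ M₂} {ρ₃ : Representation R Γ M₃}
    {f : M₂ →ₗ[R] M₃} (hequiv : ∀ σ m, f (ρ₂ σ m) = ρ₃ σ (f m)) :
    ρ₂.invariants.map f ≤ ρ₃.invariants := by
  rintro _ ⟨m, hm, rfl⟩ σ
  rw [← hequiv, hm σ]

theorem Submodule.map_eq_of_isBaseChange [Module.FaithfullyFlat R R']
    {M₂ M₃ : Type*} [AddCommGroup M₂] [Module R' M₂] [Module R M₂] [IsScalarTower R R' M₂]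
    [AddCommGroup M₃] [Module R' M₃] [Module R M₃] [IsScalarTower R R' M₃]
    {N₂ : Submodule R M₂} {N₃ : Submodule R M₃}
    (h₂ : IsBaseChange R' N₂.subtype) (h₃ : IsBaseChange R' N₃.subtype)
    {g : M₂ →ₗ[R'] M₃} (hg : Function.Surjective g) (hmaps : N₂.map (g.restrictScalars R) ≤ N₃) :
    N₂.map (g.restrictScalars R) = N₃ := by
  refine le_antisymm hmaps fun n hn => ?_
  have hφ : Function.Surjective ((g.restrictScalars R).restrict fun m hm => hmaps ⟨m, hm, rfl⟩) :=
    h₂.surjective_of_surjective h₃ (fun _ => rfl) hg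
  obtain ⟨m, hm⟩ := hφ ⟨n, hn⟩
  exact ⟨m, m.2, congrArg Subtype.val hm⟩

end Descent

section Galois

variable (R K K' R' : Type*) [CommRing R] [IsDomain R] [IsPrincipalIdealRing R]
  [Field K] [Algebra R K] [IsFractionRing R K]
  [Field K'] [Algebra K K'] [FiniteDimensional K K'] [IsGalois K K']
  [Algebra R K'] [IsScalarTower R K K']
  [CommRing R'] [Algebra R R'] [Algebra R' K'] [IsScalarTower R R' K']
  [IsIntegralClosure R' R K']

include K K' in
theorem IsIntegralClosure.module_free_of_isPrincipalIdealRing : Module.Free R R' :=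
  have : Module.IsTorsionFree R K' := .trans_faithfulSMul R K K'
  IsIntegralClosure.module_free R K K' R'

variable [IsDomain R']

theorem mem_range_algebraMap_of_forall_galRestrict_eq_s7 (a : R')
    (ha : ∀ σ : K' ≃ₐ[K] K', galRestrict R K K' R' σ a = a) :
    a ∈ Set.range (algebraMap R R') :=
  have := IsIntegralClosure.isFractionRing_of_finite_extension R K K' R'
  (Algebra.isInvariant_of_isGalois' R K K' R').isInvariant a fun g => by
    simpa using ha ((galRestrict R K K' R').symm g)

theorem invariants_eq_of_isBaseChange_of_isGalois
    {M : Type*} [AddCommGroup M] [Module R' M] [Module R M] [IsScalarTower R R' M]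
    [Module.Free R' M] [Module.Finite R' M]
    (ρ : Representation R (K' ≃ₐ[K] K') M)
    (hρ : ∀ σ (x : R') (m : M), ρ σ (x • m) = galRestrict R K K' R' σ x • ρ σ m)
    (N : Submodule R M) (hN : ∀ σ, ∀ n ∈ N, ρ σ n = n) (hbc : IsBaseChange R' N.subtype) :
    ρ.invariants = N :=
  have := IsIntegralClosure.module_free_of_isPrincipalIdealRing R K K' R'
  have : Module.Finite R R' := IsIntegralClosure.finite R K K' R'
  have : Module.Free R M := .trans (S := R')
  have : Module.Finite R M := .trans R' M
  ρ.invariants_eq_of_isBaseChange (galRestrict R K K' R' ·)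
    (mem_range_algebraMap_of_forall_galRestrict_eq_s7 R K K' R') hρ N hN hbc

end Galois

theorem statement7_general
    (R : Type) [CommRing R] [IsDomain R] [IsDiscreteValuationRing R]
    (K : Type) [Field K] [Algebra R K] [IsFractionRing R K]
    (K' : Type) [Field K'] [Algebra K K'] [FiniteDimensional K K'] [IsGalois K K']
    [Algebra R K'] [IsScalarTower R K K']
    (R' : Type) [CommRing R'] [IsDomain R']
    [Algebra R R'] [Algebra R' K'] [IsScalarTower R R' K']
    [IsIntegralClosure R' R K']
    (M'₁ M'₂ M'₃ : Type)
    [AddCommGroup M'₁] [Module R' M'₁] [Module R M'₁] [IsScalarTower R R' M'₁]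
    [AddCommGroup M'₂] [Module R' M'₂] [Module R M'₂] [IsScalarTower R R' M'₂]
    [AddCommGroup M'₃] [Module R' M'₃] [Module R M'₃] [IsScalarTower R R' M'₃]
    [Module.Free R' M'₁] [Module.Finite R' M'₁]
    [Module.Free R' M'₂] [Module.Finite R' M'₂]
    [Module.Free R' M'₃] [Module.Finite R' M'₃]
    (ρ₁ : Representation R (K' ≃ₐ[K] K') M'₁)
    (ρ₂ : Representation R (K' ≃ₐ[K] K') M'₂)
    (ρ₃ : Representation R (K' ≃ₐ[K] K') M'₃)
    (hsemi₁ : ∀ (σ : K' ≃ₐ[K] K') (x : R') (m : M'₁),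
      ρ₁ σ (x • m) = (galRestrict R K K' R' σ x) • (ρ₁ σ m))
    (hsemi₂ : ∀ (σ : K' ≃ₐ[K] K') (x : R') (m : M'₂),
      ρ₂ σ (x • m) = (galRestrict R K K' R' σ x) • (ρ₂ σ m))
    (hsemi₃ : ∀ (σ : K' ≃ₐ[K] K') (x : R') (m : M'₃),
      ρ₃ σ (x • m) = (galRestrict R K K' R' σ x) • (ρ₃ σ m))
    -- the short exact sequence `0 → M'₁ → M'₂ → M'₃ → 0` of `Γ`-descent modules:
    (g₁ : M'₁ →ₗ[R'] M'₂) (g₂ : M'₂ →ₗ[R'] M'₃)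
    (hg₁ : Function.Injective g₁) (hg₂ : Function.Surjective g₂)
    (hexact : Function.Exact g₁ g₂)
    (heq₁ : ∀ σ m, g₁ (ρ₁ σ m) = ρ₂ σ (g₁ m))
    (heq₂ : ∀ σ m, g₂ (ρ₂ σ m) = ρ₃ σ (g₂ m)) :
    -- the sequence admits an effective descent to an exact sequence of `R`-modules
    (∃ (N₁ : Submodule R M'₁) (N₂ : Submodule R M'₂) (N₃ : Submodule R M'₃),
        (∀ σ, ∀ n ∈ N₁, ρ₁ σ n = n) ∧ (∀ σ, ∀ n ∈ N₂, ρ₂ σ n = n) ∧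
        (∀ σ, ∀ n ∈ N₃, ρ₃ σ n = n) ∧
        IsBaseChange R' N₁.subtype ∧ IsBaseChange R' N₂.subtype ∧
        IsBaseChange R' N₃.subtype ∧
        Submodule.map (g₁.restrictScalars R) N₁
          = N₂ ⊓ LinearMap.ker (g₂.restrictScalars R) ∧
        Submodule.map (g₂.restrictScalars R) N₂ = N₃)
    ↔ (HasEffectiveDescent R R' (K' ≃ₐ[K] K') M'₁ ρ₁ ∧
       HasEffectiveDescent R R' (K' ≃ₐ[K] K') M'₂ ρ₂ ∧
       HasEffectiveDescent R R' (K' ≃ₐ[K] K') M'₃ ρ₃) := by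
  refine ⟨fun ⟨N₁, N₂, N₃, h₁, h₂, h₃, b₁, b₂, b₃, _⟩ => ⟨⟨N₁, h₁, b₁⟩, ⟨N₂, h₂, b₂⟩, ⟨N₃, h₃, b₃⟩⟩,
    ?_⟩
  rintro ⟨⟨N₁, h₁, b₁⟩, ⟨N₂, h₂, b₂⟩, ⟨N₃, h₃, b₃⟩⟩
  obtain rfl := invariants_eq_of_isBaseChange_of_isGalois R K K' R' ρ₁ hsemi₁ N₁ h₁ b₁
  obtain rfl := invariants_eq_of_isBaseChange_of_isGalois R K K' R' ρ₂ hsemi₂ N₂ h₂ b₂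
  obtain rfl := invariants_eq_of_isBaseChange_of_isGalois R K K' R' ρ₃ hsemi₃ N₃ h₃ b₃
  have := IsIntegralClosure.module_free_of_isPrincipalIdealRing R K K' R'
  exact ⟨_, _, _, h₁, h₂, h₃, b₁, b₂, b₃,
    Representation.map_invariants_eq_inf_ker hg₁ hexact heq₁,
    Submodule.map_eq_of_isBaseChange b₂ b₃ hg₂ (Representation.map_invariants_le heq₂)⟩

/-- A short exact sequence `0 → M'₁ → M'₂ → M'₃ → 0` of `Γ`-descent
modules over `R'`, with each `M'ᵢ` finite free over `R'`, admits an effective descent to a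
short exact sequence of `R`-modules if and only if each `(M'ᵢ, ρᵢ)` individually admits an
effective descent. -/
theorem statement7
    (R : Type) [CommRing R] [IsDomain R] [IsDiscreteValuationRing R]
    (K : Type) [Field K] [Algebra R K] [IsFractionRing R K]
    (K' : Type) [Field K'] [Algebra K K'] [FiniteDimensional K K'] [IsGalois K K']
    [Algebra R K'] [IsScalarTower R K K']
    (R' : Type) [CommRing R'] [IsDomain R'] [IsDiscreteValuationRing R']
    [Algebra R R'] [Algebra R' K'] [IsScalarTower R R' K']
    [IsIntegralClosure R' R K']
    (M'₁ M'₂ M'₃ : Type)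
    [AddCommGroup M'₁] [Module R' M'₁] [Module R M'₁] [IsScalarTower R R' M'₁]
    [AddCommGroup M'₂] [Module R' M'₂] [Module R M'₂] [IsScalarTower R R' M'₂]
    [AddCommGroup M'₃] [Module R' M'₃] [Module R M'₃] [IsScalarTower R R' M'₃]
    [Module.Free R' M'₁] [Module.Finite R' M'₁]
    [Module.Free R' M'₂] [Module.Finite R' M'₂]
    [Module.Free R' M'₃] [Module.Finite R' M'₃]
    (ρ₁ : Representation R (K' ≃ₐ[K] K') M'₁)
    (ρ₂ : Representation R (K' ≃ₐ[K] K') M'₂)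
    (ρ₃ : Representation R (K' ≃ₐ[K] K') M'₃)
    (hsemi₁ : ∀ (σ : K' ≃ₐ[K] K') (x : R') (m : M'₁),
      ρ₁ σ (x • m) = (galRestrict R K K' R' σ x) • (ρ₁ σ m))
    (hsemi₂ : ∀ (σ : K' ≃ₐ[K] K') (x : R') (m : M'₂),
      ρ₂ σ (x • m) = (galRestrict R K K' R' σ x) • (ρ₂ σ m))
    (hsemi₃ : ∀ (σ : K' ≃ₐ[K] K') (x : R') (m : M'₃),
      ρ₃ σ (x • m) = (galRestrict R K K' R' σ x) • (ρ₃ σ m))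
    -- the short exact sequence `0 → M'₁ → M'₂ → M'₃ → 0` of `Γ`-descent modules:
    (g₁ : M'₁ →ₗ[R'] M'₂) (g₂ : M'₂ →ₗ[R'] M'₃)
    (hg₁ : Function.Injective g₁) (hg₂ : Function.Surjective g₂)
    (hexact : Function.Exact g₁ g₂)
    (heq₁ : ∀ σ m, g₁ (ρ₁ σ m) = ρ₂ σ (g₁ m))
    (heq₂ : ∀ σ m, g₂ (ρ₂ σ m) = ρ₃ σ (g₂ m)) :
    -- the sequence admits an effective descent to an exact sequence of `R`-modules
    (∃ (N₁ : Submodule R M'₁) (N₂ : Submodule R M'₂) (N₃ : Submodule R M'₃),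
        (∀ σ, ∀ n ∈ N₁, ρ₁ σ n = n) ∧ (∀ σ, ∀ n ∈ N₂, ρ₂ σ n = n) ∧
        (∀ σ, ∀ n ∈ N₃, ρ₃ σ n = n) ∧
        IsBaseChange R' N₁.subtype ∧ IsBaseChange R' N₂.subtype ∧
        IsBaseChange R' N₃.subtype ∧
        Submodule.map (g₁.restrictScalars R) N₁
          = N₂ ⊓ LinearMap.ker (g₂.restrictScalars R) ∧
        Submodule.map (g₂.restrictScalars R) N₂ = N₃)
    ↔ (HasEffectiveDescent R R' (K' ≃ₐ[K] K') M'₁ ρ₁ ∧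
       HasEffectiveDescent R R' (K' ≃ₐ[K] K') M'₂ ρ₂ ∧
       HasEffectiveDescent R R' (K' ≃ₐ[K] K') M'₃ ρ₃) :=
  statement7_general R K K' R' M'₁ M'₂ M'₃ ρ₁ ρ₂ ρ₃ hsemi₁ hsemi₂ hsemi₃ g₁ g₂ hg₁ hg₂ hexact heq₁
    heq₂
end
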